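/- arXiv:1510.07292 — 5 statements merged into one kernel-verified Lean document; each statement's English description precedes it below -/
import Mathlib

section
/- Let φ be a function from convex bodies in ℝ^n to [0, ∞) that is quasi-concave with respect to Minkowski addition (φ((1-λ)K + λL) ≥ min(φ(K), φ(L)) for λ ∈ (0,1)) and monotone under inclusion. Fix radii r_1, ..., r_N > 0 and define F(x_1, ..., x_N) = φ(⋂_{i=1}^N B(x_i, r_i)) on the set of tuples where the intersection is a convex body. Then F is quasi-concave on its support: F((u⃗ + v⃗)/2) ≥ min(F(u⃗), F(v⃗)) whenever both intersections are convex bodies. -/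
open Metric Set Pointwise

/-- A convex body in `ℝⁿ`: a compact convex set with nonempty interior. -/
def IsConvexBody {n : ℕ} (K : Set (EuclideanSpace ℝ (Fin n))) : Prop :=
  IsCompact K ∧ Convex ℝ K ∧ (interior K).Nonempty

theorem ball_inter_quasiconcave (n N : ℕ) (φ : Set (EuclideanSpace ℝ (Fin n)) → ℝ)
    (hφnonneg : ∀ K, IsConvexBody K → 0 ≤ φ K)
    (hqc : ∀ K L : Set (EuclideanSpace ℝ (Fin n)), IsConvexBody K → IsConvexBody L →
      ∀ lam ∈ Set.Ioo (0:ℝ) 1, min (φ K) (φ L) ≤ φ ((1 - lam) • K + lam • L))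
    (hmono : ∀ K L : Set (EuclideanSpace ℝ (Fin n)), IsConvexBody K → IsConvexBody L →
      K ⊆ L → φ K ≤ φ L)
    (r : Fin N → ℝ) (hr : ∀ i, 0 < r i)
    (u v : Fin N → EuclideanSpace ℝ (Fin n))
    (hu : IsConvexBody (⋂ i, Metric.closedBall (u i) (r i)))
    (hv : IsConvexBody (⋂ i, Metric.closedBall (v i) (r i))) :
    min (φ (⋂ i, Metric.closedBall (u i) (r i))) (φ (⋂ i, Metric.closedBall (v i) (r i))) ≤
      φ (⋂ i, Metric.closedBall ((2⁻¹ : ℝ) • (u i + v i)) (r i)) := by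
  set K := ⋂ i, Metric.closedBall (u i) (r i) with hK
  set L := ⋂ i, Metric.closedBall (v i) (r i) with hL
  set T := ⋂ i, Metric.closedBall ((2⁻¹ : ℝ) • (u i + v i)) (r i) with hT
  set M := (2⁻¹ : ℝ) • K + (2⁻¹ : ℝ) • L with hM
  -- M ⊆ T
  have hMsub : M ⊆ T := by
    rintro z hz
    rw [hM, Set.mem_add] at hz
    obtain ⟨a, ⟨x, hx, rfl⟩, b, ⟨y, hy, rfl⟩, rfl⟩ := hz
    rw [hK, Set.mem_iInter] at hx
    rw [hL, Set.mem_iInter] at hy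
    rw [hT, Set.mem_iInter]
    intro i
    have hxi := hx i
    have hyi := hy i
    rw [mem_closedBall, dist_eq_norm] at hxi hyi ⊢
    have heq : (2⁻¹:ℝ) • x + (2⁻¹:ℝ) • y - (2⁻¹:ℝ) • (u i + v i)
        = (2⁻¹:ℝ) • (x - u i) + (2⁻¹:ℝ) • (y - v i) := by
      module
    rw [heq]
    calc ‖(2⁻¹:ℝ) • (x - u i) + (2⁻¹:ℝ) • (y - v i)‖
        ≤ ‖(2⁻¹:ℝ) • (x - u i)‖ + ‖(2⁻¹:ℝ) • (y - v i)‖ := norm_add_le _ _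
      _ = 2⁻¹ * ‖x - u i‖ + 2⁻¹ * ‖y - v i‖ := by
          rw [norm_smul, norm_smul]; norm_num
      _ ≤ 2⁻¹ * r i + 2⁻¹ * r i := by
          gcongr
      _ = r i := by ring
  -- M is a convex body
  have hKne : K.Nonempty := hu.2.2.mono interior_subset
  have hLne : L.Nonempty := hv.2.2.mono interior_subset
  have hMcb : IsConvexBody M := by
    refine ⟨(hu.1.smul _).add (hv.1.smul _), (hu.2.1.smul _).add (hv.2.1.smul _), ?_⟩
    have hopen : IsOpen (interior ((2⁻¹:ℝ) • K) + (2⁻¹:ℝ) • L) :=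
      isOpen_interior.add_right
    have hsub : interior ((2⁻¹:ℝ) • K) + (2⁻¹:ℝ) • L ⊆ interior M :=
      hopen.subset_interior_iff.mpr (Set.add_subset_add_right interior_subset)
    have hne : (interior ((2⁻¹:ℝ) • K) + (2⁻¹:ℝ) • L).Nonempty := by
      rw [interior_smul₀ (by norm_num : (2⁻¹:ℝ) ≠ 0)]
      exact (hu.2.2.smul_set).add (hLne.smul_set)
    exact hne.mono hsub
  -- T is a convex body
  have hTclosed : IsClosed T := isClosed_iInter fun i => Metric.isClosed_closedBall
  have hTcb : IsConvexBody T := by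
    refine ⟨?_, convex_iInter fun i => convex_closedBall _ _, ?_⟩
    · rcases isEmpty_or_nonempty (Fin N) with hN | hN
      · have : T = Set.univ := by rw [hT, Set.iInter_of_empty]
        rw [this]
        have : K = Set.univ := by rw [hK, Set.iInter_of_empty]
        rw [this] at hu
        exact hu.1
      · obtain ⟨i⟩ := hN
        have : T ⊆ Metric.closedBall ((2⁻¹ : ℝ) • (u i + v i)) (r i) :=
          Set.iInter_subset _ i
        exact (isCompact_closedBall _ _).of_isClosed_subset hTclosed this
    · exact hMcb.2.2.mono ((interior_mono hMsub))
  -- conclude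
  have h1 := hqc K L hu hv (2⁻¹ : ℝ) ⟨by norm_num, by norm_num⟩
  have h2 : (1 - (2⁻¹:ℝ)) = (2⁻¹:ℝ) := by norm_num
  rw [h2] at h1
  exact h1.trans (hmono M T hMcb hTcb hMsub)
end

section
/- Let f : S^{n-1} → ℝ be positive and continuous, and let R > sup_{θ ∈ S^{n-1}} f(θ). Define A(f, R) as the star body with radial function ρ(-θ) = R - f(θ). Then ⋂_{θ ∈ S^{n-1}} B(-(R - f(θ))θ, R) = ⋂_{x ∈ A(f, R)} B(x, R), i.e., intersecting balls of radius R centered at all points of A(f, R) is the same as intersecting only over its boundary points -(R - f(θ))θ. -/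
/-!
A closed ball is convex, so it contains a set as soon as it contains the set's convex hull.
Every point `s • θ` of the star body lies on the chord through the origin joining the two
boundary points `-(R - f θ) • θ` and `(R - f (-θ)) • θ`, so the star body lies in the convex
hull of its boundary points, and both intersections of balls agree.
-/

open Metric Set

theorem biInter_closedBall_eq_of_subset_convexHull {E : Type*} [SeminormedAddCommGroup E]
    [NormedSpace ℝ E] {s t : Set E} (hst : s ⊆ t) (hts : t ⊆ convexHull ℝ s) (r : ℝ) :
    ⋂ x ∈ t, closedBall x r = ⋂ x ∈ s, closedBall x r := by
  have mem_iff : ∀ u : Set E, ∀ y, y ∈ ⋂ x ∈ u, closedBall x r ↔ u ⊆ closedBall y r := by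
    intro u y
    simp only [mem_iInter, mem_closedBall, dist_comm y]
    rfl
  ext y
  rw [mem_iff, mem_iff]
  exact ⟨hst.trans, fun hs => hts.trans ((convex_closedBall y r).convexHull_subset_iff.2 hs)⟩

theorem smul_mem_segment_smul {E : Type*} [AddCommGroup E] [Module ℝ E] (v : E) {a b s : ℝ}
    (has : a ≤ s) (hsb : s ≤ b) : s • v ∈ segment ℝ (a • v) (b • v) := by
  have hs : s ∈ segment ℝ a b := segment_eq_Icc (has.trans hsb) ▸ ⟨has, hsb⟩
  exact image_segment ℝ ((LinearMap.id : ℝ →ₗ[ℝ] ℝ).smulRight v).toAffineMap a b ▸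
    mem_image_of_mem _ hs

theorem ball_inter_over_star_body_eq_boundary_general (n : ℕ) (f : EuclideanSpace ℝ (Fin n) → ℝ)
    (R : ℝ) (hR : ∀ θ ∈ Metric.sphere (0 : EuclideanSpace ℝ (Fin n)) 1, f θ < R) :
    (⋂ θ ∈ Metric.sphere (0 : EuclideanSpace ℝ (Fin n)) 1,
        Metric.closedBall ((-(R - f θ)) • θ) R) =
      ⋂ x ∈ {x : EuclideanSpace ℝ (Fin n) |
          ∃ θ ∈ Metric.sphere (0 : EuclideanSpace ℝ (Fin n)) 1,
            ∃ s : ℝ, 0 ≤ s ∧ s ≤ R - f (-θ) ∧ x = s • θ},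
        Metric.closedBall x R := by
  set S := Metric.sphere (0 : EuclideanSpace ℝ (Fin n)) 1
  have neg_mem : ∀ θ ∈ S, -θ ∈ S := fun θ hθ => by simpa [S] using hθ
  rw [← biInter_image (f := fun θ => (-(R - f θ)) • θ) (g := fun x => closedBall x R), eq_comm]
  refine biInter_closedBall_eq_of_subset_convexHull ?_ ?_ R
  · rintro _ ⟨θ, hθ, rfl⟩
    exact ⟨-θ, neg_mem θ hθ, R - f θ, (sub_pos.2 (hR θ hθ)).le, by simp, by module⟩
  · rintro _ ⟨θ, hθ, s, hs0, hsR, rfl⟩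
    have hboundary : (R - f (-θ)) • θ = (-(R - f (-θ))) • -θ := by module
    refine segment_subset_convexHull (mem_image_of_mem _ hθ) ?_
      (smul_mem_segment_smul θ (by linarith [hR θ hθ]) hsR)
    exact hboundary ▸ mem_image_of_mem _ (neg_mem θ hθ)

theorem ball_inter_over_star_body_eq_boundary (n : ℕ) (f : EuclideanSpace ℝ (Fin n) → ℝ)
    (hf : Continuous f) (hpos : ∀ θ ∈ Metric.sphere (0 : EuclideanSpace ℝ (Fin n)) 1, 0 < f θ)
    (R : ℝ) (hR : ∀ θ ∈ Metric.sphere (0 : EuclideanSpace ℝ (Fin n)) 1, f θ < R) :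
    (⋂ θ ∈ Metric.sphere (0 : EuclideanSpace ℝ (Fin n)) 1,
        Metric.closedBall ((-(R - f θ)) • θ) R) =
      ⋂ x ∈ {x : EuclideanSpace ℝ (Fin n) |
          ∃ θ ∈ Metric.sphere (0 : EuclideanSpace ℝ (Fin n)) 1,
            ∃ s : ℝ, 0 ≤ s ∧ s ≤ R - f (-θ) ∧ x = s • θ},
        Metric.closedBall x R :=
  ball_inter_over_star_body_eq_boundary_general n f R hR
end

section
/- Let f : S^{n-1} → ℝ be positive and continuous with 0 < m ≤ f ≤ M, let θ_1, ..., θ_N ∈ S^{n-1} be points not lying in a closed hemisphere, and set L = ⋂_{i=1}^N H^-(θ_i, f(θ_i)). Then there is a constant C (depending only on m, M, and L) such that for all sufficiently large R, (1 - C/R) L ⊆ ⋂_{i=1}^N B(-(R - f(θ_i))θ_i, R) ⊆ L. In particular, ⋂_{i=1}^N B(-(R - f(θ_i))θ_i, R) converges to L in the Hausdorff metric as R → ∞. -/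
open Metric Set Pointwise RealInnerProductSpace Filter

lemma mem_cb_iff_quad {E : Type*} [NormedAddCommGroup E] [InnerProductSpace ℝ E]
    {θ : E} (hθ : ‖θ‖ = 1) {R c : ℝ} (hR : 0 ≤ R) (x : E) :
    x ∈ Metric.closedBall ((-(R - c)) • θ) R ↔
      ‖x‖ ^ 2 + 2 * (R - c) * ⟪x, θ⟫ + (R - c) ^ 2 ≤ R ^ 2 := by
  rw [Metric.mem_closedBall, dist_eq_norm]
  have h1 : x - (-(R - c)) • θ = x + (R - c) • θ := by rw [neg_smul, sub_neg_eq_add]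
  rw [h1]
  have h2 : ‖x + (R - c) • θ‖ ^ 2 = ‖x‖ ^ 2 + 2 * (R - c) * ⟪x, θ⟫ + (R - c) ^ 2 := by
    rw [norm_add_sq_real, real_inner_smul_right, norm_smul, hθ]
    rw [mul_one, Real.norm_eq_abs, sq_abs]
    ring
  constructor
  · intro h
    nlinarith [norm_nonneg (x + (R - c) • θ)]
  · intro h
    nlinarith [norm_nonneg (x + (R - c) • θ)]

set_option maxHeartbeats 1000000 in
theorem ball_inter_approx_halfspace_inter (n N : ℕ) (f : EuclideanSpace ℝ (Fin n) → ℝ)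
    (hf : Continuous f) (m M : ℝ) (hm : 0 < m)
    (hbounds : ∀ θ ∈ Metric.sphere (0 : EuclideanSpace ℝ (Fin n)) 1, m ≤ f θ ∧ f θ ≤ M)
    (θ : Fin N → EuclideanSpace ℝ (Fin n))
    (hθ : ∀ i, θ i ∈ Metric.sphere (0 : EuclideanSpace ℝ (Fin n)) 1)
    (hhemi : ∀ z ∈ Metric.sphere (0 : EuclideanSpace ℝ (Fin n)) 1, ∃ i, 0 < ⟪θ i, z⟫) :
    (∃ C R₀ : ℝ, 0 < C ∧ ∀ R ≥ R₀,
        (1 - C / R) • (⋂ i, {x : EuclideanSpace ℝ (Fin n) | ⟪x, θ i⟫ ≤ f (θ i)}) ⊆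
            (⋂ i, Metric.closedBall ((-(R - f (θ i))) • θ i) R) ∧
          (⋂ i, Metric.closedBall ((-(R - f (θ i))) • θ i) R) ⊆
            ⋂ i, {x : EuclideanSpace ℝ (Fin n) | ⟪x, θ i⟫ ≤ f (θ i)}) ∧
      Filter.Tendsto
        (fun R : ℝ => Metric.hausdorffDist
          (⋂ i, Metric.closedBall ((-(R - f (θ i))) • θ i) R)
          (⋂ i, {x : EuclideanSpace ℝ (Fin n) | ⟪x, θ i⟫ ≤ f (θ i)}))
        Filter.atTop (nhds 0) := by
  rcases Nat.eq_zero_or_pos N with hN | hN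
  · subst hN
    haveI : IsEmpty (Fin 0) := inferInstance
    simp only [Set.iInter_of_empty]
    refine ⟨⟨1, 0, one_pos, fun R _ => ⟨Set.subset_univ _, Set.subset_univ _⟩⟩, ?_⟩
    simp only [Metric.hausdorffDist_self_zero]
    exact tendsto_const_nhds
  -- main case
  have i₀ : Fin N := ⟨0, hN⟩
  have hθn : ∀ i, ‖θ i‖ = 1 := fun i => mem_sphere_zero_iff_norm.1 (hθ i)
  have hM : 0 < M := lt_of_lt_of_le hm ((hbounds _ (hθ i₀)).1.trans (hbounds _ (hθ i₀)).2)
  -- uniform positivity on the sphere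
  obtain ⟨ε, hε, hεsp⟩ : ∃ ε > 0, ∀ z ∈ Metric.sphere (0 : EuclideanSpace ℝ (Fin n)) 1, ∃ i, ε ≤ ⟪θ i, z⟫ := by
    rcases (Metric.sphere (0 : EuclideanSpace ℝ (Fin n)) 1).eq_empty_or_nonempty with hs | hs
    · exact ⟨1, one_pos, fun z hz => absurd hz (by simp [hs])⟩
    · haveI : Nonempty (Fin N) := ⟨i₀⟩
      have hgc : Continuous fun z : EuclideanSpace ℝ (Fin n) => Finset.univ.sup' Finset.univ_nonempty
          (fun i => ⟪θ i, z⟫) := by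
        exact Continuous.finset_sup'_apply Finset.univ_nonempty
          (fun i _ => continuous_const.inner continuous_id)
      obtain ⟨z₀, hz₀, hmin⟩ := (isCompact_sphere (0 : EuclideanSpace ℝ (Fin n)) 1).exists_isMinOn hs hgc.continuousOn
      obtain ⟨i, hi⟩ := hhemi z₀ hz₀
      refine ⟨_, lt_of_lt_of_le hi (Finset.le_sup' (fun k => ⟪θ k, z₀⟫) (Finset.mem_univ i)), fun z hz => ?_⟩
      obtain ⟨j, _, hj⟩ := Finset.exists_mem_eq_sup' Finset.univ_nonempty (fun i => ⟪θ i, z⟫)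
      exact ⟨j, hj ▸ isMinOn_iff.1 hmin z hz⟩
  set D : ℝ := M / ε with hDdef
  have hD : 0 < D := div_pos hM hε
  -- boundedness of L
  set L : Set (EuclideanSpace ℝ (Fin n)) := ⋂ i, {x : EuclideanSpace ℝ (Fin n) | ⟪x, θ i⟫ ≤ f (θ i)} with hLdef
  have hLbdd : ∀ x ∈ L, ‖x‖ ≤ D := by
    intro x hx
    rcases eq_or_ne x 0 with rfl | hx0
    · simpa using hD.le
    · have hxn : 0 < ‖x‖ := norm_pos_iff.2 hx0
      have hz : ‖x‖⁻¹ • x ∈ Metric.sphere (0 : EuclideanSpace ℝ (Fin n)) 1 := by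
        simp [norm_smul, abs_of_pos (inv_pos.2 hxn), inv_mul_cancel₀ hxn.ne']
      obtain ⟨i, hi⟩ := hεsp _ hz
      rw [real_inner_smul_right] at hi
      have hxi : ⟪x, θ i⟫ ≤ f (θ i) := Set.mem_iInter.1 hx i
      have hfM : f (θ i) ≤ M := (hbounds _ (hθ i)).2
      have hcomm : ⟪θ i, x⟫ = ⟪x, θ i⟫ := real_inner_comm _ _
      rw [hcomm] at hi
      have hinv : ‖x‖⁻¹ * ‖x‖ = 1 := inv_mul_cancel₀ hxn.ne'
      rw [hDdef, le_div_iff₀ hε]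
      nlinarith [mul_le_mul_of_nonneg_left hi (norm_nonneg x)]
  set C : ℝ := D ^ 2 / m with hCdef
  have hC : 0 < C := by positivity
  have hCm : C * m = D ^ 2 := by rw [hCdef]; field_simp
  set R₀ : ℝ := 2 * M + C with hR₀def
  have hR₀pos : 0 < R₀ := by rw [hR₀def]; linarith
  have main : ∀ R ≥ R₀,
      (1 - C / R) • L ⊆ (⋂ i, Metric.closedBall ((-(R - f (θ i))) • θ i) R) ∧
        (⋂ i, Metric.closedBall ((-(R - f (θ i))) • θ i) R) ⊆ L := by
    intro R hR
    have hR0 : 0 < R := lt_of_lt_of_le hR₀pos hR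
    have hRM : 2 * M ≤ R := by rw [hR₀def] at hR; linarith
    have hRC : C ≤ R := by rw [hR₀def] at hR; linarith
    constructor
    · rintro y hy
      obtain ⟨x, hxL, rfl⟩ := Set.mem_smul_set.1 hy
      refine Set.mem_iInter.2 fun i => ?_
      rw [mem_cb_iff_quad (hθn i) hR0.le]
      have ha : ⟪x, θ i⟫ ≤ f (θ i) := Set.mem_iInter.1 hxL i
      have hs : ‖x‖ ≤ D := hLbdd x hxL
      obtain ⟨hf1, hf2⟩ := hbounds _ (hθ i)
      have hCR1 : C / R ≤ 1 := (div_le_one hR0).2 hRC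
      have hCR0 : 0 ≤ C / R := div_nonneg hC.le hR0.le
      rw [real_inner_smul_left, norm_smul, Real.norm_eq_abs,
        abs_of_nonneg (by linarith : (0:ℝ) ≤ 1 - C / R)]
      set q : ℝ := C / R with hqdef
      have hRq : R * q = C := by rw [hqdef]; field_simp
      clear_value q
      set t : ℝ := 1 - q with htdef
      have ht0 : 0 ≤ t := by rw [htdef]; linarith
      have ht1 : t ≤ 1 := by rw [htdef]; linarith
      have hRt : R * (1 - t) = C := by rw [htdef]; simpa using hRq
      clear_value t
      have hfR : 2 * f (θ i) ≤ R := by linarith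
      have hRf : 0 ≤ R - f (θ i) := by linarith
      have hs0 : (0:ℝ) ≤ ‖x‖ := norm_nonneg x
      set a : ℝ := ⟪x, θ i⟫ with hadef
      set s : ℝ := ‖x‖ with hsdef
      set c : ℝ := f (θ i) with hcdef
      clear_value a s c
      clear hy hxL hf hbounds hθ hhemi hεsp hLbdd hθn
      nlinarith [mul_nonneg (mul_nonneg hRf ht0) (sub_nonneg.2 ha),
        mul_nonneg (mul_nonneg (by linarith : (0:ℝ) ≤ R - 2 * c) (by linarith : (0:ℝ) ≤ 1 - t)) (by linarith : (0:ℝ) ≤ c),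
        mul_le_mul hs hs hs0 hD.le,
        mul_le_mul_of_nonneg_left hf1 hC.le,
        mul_nonneg (by nlinarith : (0:ℝ) ≤ 1 - t * t) (mul_self_nonneg s)]
    · intro x hx
      refine Set.mem_iInter.2 fun i => ?_
      have hq := (mem_cb_iff_quad (hθn i) hR0.le x).1 (Set.mem_iInter.1 hx i)
      obtain ⟨hf1, hf2⟩ := hbounds _ (hθ i)
      simp only [Set.mem_setOf_eq]
      by_contra h
      push_neg at h
      have hs : ⟪x, θ i⟫ ≤ ‖x‖ := by
        have := real_inner_le_norm x (θ i)
        rwa [hθn i, mul_one] at this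
      have hRf : 0 < R - f (θ i) := by linarith
      have hs0 : (0:ℝ) ≤ ‖x‖ := norm_nonneg x
      set a : ℝ := ⟪x, θ i⟫ with hadef
      set s : ℝ := ‖x‖ with hsdef
      set c : ℝ := f (θ i) with hcdef
      clear_value a s c
      clear hx hf hbounds hθ hhemi hεsp hLbdd hθn
      nlinarith [mul_le_mul hs hs (by linarith : (0:ℝ) ≤ a) hs0,
        mul_pos hRf (by linarith : (0:ℝ) < a - c)]
  refine ⟨⟨C, R₀, hC, main⟩, ?_⟩
  have hbig : ∀ R ≥ R₀, Metric.hausdorffDist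
      (⋂ i, Metric.closedBall ((-(R - f (θ i))) • θ i) R) L ≤ C * D / R := by
    intro R hR
    have hR0 : 0 < R := hR₀pos.trans_le hR
    obtain ⟨h1, h2⟩ := main R hR
    apply Metric.hausdorffDist_le_of_mem_dist (div_nonneg (mul_nonneg hC.le hD.le) hR0.le)
    · intro x hx
      exact ⟨x, h2 hx, by rw [dist_self]; exact div_nonneg (mul_nonneg hC.le hD.le) hR0.le⟩
    · intro y hyL
      refine ⟨(1 - C / R) • y, h1 (Set.smul_mem_smul_set hyL), ?_⟩
      have heq : y - (1 - C / R) • y = (C / R) • y := by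
        rw [sub_smul, one_smul]; abel
      rw [dist_eq_norm, heq, norm_smul, Real.norm_eq_abs,
        abs_of_nonneg (div_nonneg hC.le hR0.le)]
      have := hLbdd y hyL
      calc C / R * ‖y‖ ≤ C / R * D :=
            mul_le_mul_of_nonneg_left this (div_nonneg hC.le hR0.le)
        _ = C * D / R := by ring
  refine squeeze_zero' (Filter.Eventually.of_forall fun R => Metric.hausdorffDist_nonneg)
    ((Filter.eventually_ge_atTop R₀).mono fun R hR => hbig R hR) ?_
  simpa using Filter.Tendsto.div_atTop (tendsto_const_nhds (x := C * D)) Filter.tendsto_id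
end

section
/- Every radially symmetric probability density f on ℝ^n that is bounded by 1 is less peaked than the indicator of the centered Euclidean ball of volume 1: for every origin-symmetric convex set C ⊆ ℝ^n, ∫_C f(x) dx ≤ |C ∩ B(0, r_n)|, where r_n = ω_n^{-1/n} so that |B(0, r_n)| = 1. -/
open Metric Set MeasureTheory

/-!
Let `B` be the closed ball of volume one and `h = f - 𝟙_B`. Then `h` is radial, `h ≤ 0` on `B`,
`h ≥ 0` off `B`, and `∫ h = 0`. In polar coordinates `x = t • θ` the ray integral
`∫ h (t • θ) dρ(t)` does not depend on `θ`, so it is `≤ 0`. As `C` is star-shaped about `0`,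
each ray either meets `C` only inside `B`, where `h ≤ 0`, or contains all of its part inside `B`,
so that what `C` misses of it has `h ≥ 0` and the ray contributes at most the full ray integral.
Hence `∫_C h ≤ 0`, which is the claim.
-/

theorem Convex.starConvex_zero_of_forall_neg_mem {𝕜 E : Type*} [Field 𝕜] [LinearOrder 𝕜]
    [IsStrictOrderedRing 𝕜] [AddCommGroup E] [Module 𝕜 E] {C : Set E} (hC : Convex 𝕜 C)
    (hsym : ∀ x ∈ C, -x ∈ C) : StarConvex 𝕜 0 C := by
  intro x hx
  have h0 : (0 : E) ∈ C := by
    simpa using hC hx (hsym x hx) (by positivity : (0 : 𝕜) ≤ 1 / 2)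
      (by positivity : (0 : 𝕜) ≤ 1 / 2) (add_halves 1)
  exact hC.starConvex h0 hx

theorem StarConvex.indicator_smul_nonpos_or_le {E : Type*} [NormedAddCommGroup E]
    [NormedSpace ℝ E] {C : Set E} (hC : StarConvex ℝ 0 C) {h : E → ℝ} {r : ℝ}
    (hin : ∀ x ∈ closedBall 0 r, h x ≤ 0) (hout : ∀ x ∉ closedBall 0 r, 0 ≤ h x) (v : E) :
    (∀ t : ℝ, 0 ≤ t → C.indicator h (t • v) ≤ 0) ∨
      (∀ t : ℝ, 0 ≤ t → C.indicator h (t • v) ≤ h (t • v)) := by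
  by_cases hexit : ∃ t : ℝ, 0 ≤ t ∧ t • v ∈ C ∧ t • v ∉ closedBall 0 r
  · obtain ⟨t, ht, htC, htB⟩ := hexit
    refine .inr fun s hs ↦ ?_
    by_cases hsC : s • v ∈ C
    · rw [indicator_of_mem hsC]
    rw [indicator_of_notMem hsC]
    refine hout _ fun hsB ↦ hsC ?_
    have hst : s < t := by
      simp only [mem_closedBall_zero_iff, norm_smul, Real.norm_eq_abs, abs_of_nonneg hs,
        abs_of_nonneg ht] at hsB htB
      by_contra! hts
      nlinarith [norm_nonneg v]
    have ht₀ : 0 < t := hs.trans_lt hst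
    rw [show s • v = (s / t) • t • v by rw [smul_smul, div_mul_cancel₀ _ ht₀.ne']]
    exact hC.smul_mem htC (by positivity) ((div_le_one ht₀).mpr hst.le)
  · push Not at hexit
    refine .inl fun t ht ↦ ?_
    by_cases htC : t • v ∈ C
    · rw [indicator_of_mem htC]; exact hin _ (hexit t ht htC)
    · rw [indicator_of_notMem htC]

namespace MeasureTheory.Measure

variable {E : Type*} [NormedAddCommGroup E] [NormedSpace ℝ E] [MeasurableSpace E] [BorelSpace E]
  [FiniteDimensional ℝ E]

-- the radial factor `t ^ (d - 1) dt` of a Haar measure in polar coordinates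
local notation "ρ" => volumeIoiPow (Module.finrank ℝ E - 1)

theorem measurableEmbedding_smul_sphereProd :
    MeasurableEmbedding (fun p : sphere (0 : E) 1 × Ioi (0 : ℝ) ↦ (p.2 : ℝ) • (p.1 : E)) :=
  (MeasurableEmbedding.subtype_coe (measurableSet_singleton 0).compl).comp
    (homeomorphUnitSphereProd E).symm.measurableEmbedding

variable [Nontrivial E] (μ : Measure E) [μ.IsAddHaarMeasure]

theorem measurePreserving_smul_sphereProd :
    MeasurePreserving (fun p : sphere (0 : E) 1 × Ioi (0 : ℝ) ↦ (p.2 : ℝ) • (p.1 : E))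
      (μ.toSphere.prod ρ) μ := by
  have hval : MeasurePreserving ((↑) : ({0}ᶜ : Set E) → E) (μ.comap (↑)) μ :=
    ⟨measurable_subtype_coe, by
      rw [map_comap_subtype_coe (measurableSet_singleton _).compl, restrict_compl_singleton]⟩
  exact hval.comp <| μ.measurePreserving_homeomorphUnitSphereProd.symm
    (homeomorphUnitSphereProd E).toMeasurableEquiv

variable {F : Type*} [NormedAddCommGroup F]

theorem integrable_smul_sphereProd {g : E → F} (hg : Integrable g μ) :
    Integrable (fun p : sphere (0 : E) 1 × Ioi (0 : ℝ) ↦ g ((p.2 : ℝ) • (p.1 : E)))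
      (μ.toSphere.prod ρ) :=
  ((measurePreserving_smul_sphereProd μ).integrable_comp_emb
    measurableEmbedding_smul_sphereProd).mpr hg

variable [NormedSpace ℝ F]

theorem integral_eq_integral_sphere_integral_Ioi {g : E → F} (hg : Integrable g μ) :
    ∫ x, g x ∂μ =
      ∫ θ : sphere (0 : E) 1, ∫ t : Ioi (0 : ℝ), g ((t : ℝ) • (θ : E)) ∂ρ ∂μ.toSphere := by
  rw [← (measurePreserving_smul_sphereProd μ).integral_comp measurableEmbedding_smul_sphereProd,
    integral_prod _ (integrable_smul_sphereProd μ hg)]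

theorem integral_eq_toSphere_real_smul_integral_ray [CompleteSpace F] {g : E → F}
    (hg : Integrable g μ) (hrad : ∀ x y : E, ‖x‖ = ‖y‖ → g x = g y) (θ : sphere (0 : E) 1) :
    ∫ x, g x ∂μ = μ.toSphere.real univ • ∫ t : Ioi (0 : ℝ), g ((t : ℝ) • (θ : E)) ∂ρ := by
  have hray (θ' : sphere (0 : E) 1) :
      ∫ t : Ioi (0 : ℝ), g ((t : ℝ) • (θ' : E)) ∂ρ = ∫ t : Ioi (0 : ℝ), g ((t : ℝ) • (θ : E)) ∂ρ :=
    integral_congr_ae <| .of_forall fun t ↦ hrad _ _ <| by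
      simp [norm_smul, abs_of_pos (mem_Ioi.mp t.2)]
  rw [integral_eq_integral_sphere_integral_Ioi μ hg, integral_congr_ae (.of_forall hray),
    integral_const]

theorem setIntegral_nonpos_of_radial_of_starConvex {h : E → ℝ} (hint : Integrable h μ)
    (hrad : ∀ x y : E, ‖x‖ = ‖y‖ → h x = h y) (htot : ∫ x, h x ∂μ ≤ 0) {r : ℝ}
    (hin : ∀ x ∈ closedBall 0 r, h x ≤ 0) (hout : ∀ x ∉ closedBall 0 r, 0 ≤ h x)
    {C : Set E} (hC : StarConvex ℝ 0 C) (hCm : NullMeasurableSet C μ) :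
    ∫ x in C, h x ∂μ ≤ 0 := by
  have : NeZero μ.toSphere := ⟨μ.toSphere_ne_zero⟩
  have hray (θ : sphere (0 : E) 1) : ∫ t : Ioi (0 : ℝ), h ((t : ℝ) • (θ : E)) ∂ρ ≤ 0 := by
    rw [integral_eq_toSphere_real_smul_integral_ray μ hint hrad θ, smul_eq_mul] at htot
    exact nonpos_of_mul_nonpos_right htot measureReal_univ_pos
  have hintC := hint.indicator₀ hCm
  rw [← integral_indicator₀ hCm, integral_eq_integral_sphere_integral_Ioi μ hintC]
  refine integral_nonpos_of_ae ?_
  filter_upwards [(integrable_smul_sphereProd μ hint).prod_right_ae,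
    (integrable_smul_sphereProd μ hintC).prod_right_ae] with θ hθ hθC
  rcases hC.indicator_smul_nonpos_or_le hin hout (θ : E) with hle | hle
  · exact integral_nonpos fun t ↦ hle t (mem_Ioi.mp t.2).le
  · exact (integral_mono hθC hθ fun t ↦ hle t (mem_Ioi.mp t.2).le).trans (hray θ)

end MeasureTheory.Measure

theorem radial_density_less_peaked_than_ball_general (n : ℕ) (hn : 1 ≤ n)
    (f : EuclideanSpace ℝ (Fin n) → ℝ)
    (hnonneg : ∀ x, 0 ≤ f x) (hbd : ∀ x, f x ≤ 1)
    (hint : ∫ x, f x = 1)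
    (hradial : ∀ x y : EuclideanSpace ℝ (Fin n), ‖x‖ = ‖y‖ → f x = f y)
    (r : ℝ) (hr : volume (Metric.closedBall (0 : EuclideanSpace ℝ (Fin n)) r) = 1)
    (C : Set (EuclideanSpace ℝ (Fin n))) (hC : Convex ℝ C) (hsym : ∀ x ∈ C, -x ∈ C) :
    ∫ x in C, f x ≤
      (volume (C ∩ Metric.closedBall (0 : EuclideanSpace ℝ (Fin n)) r)).toReal := by
  have : Nontrivial (EuclideanSpace ℝ (Fin n)) :=
    Module.nontrivial_of_finrank_pos (R := ℝ) (by rw [finrank_euclideanSpace_fin]; omega)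
  have hf : Integrable f := .of_integral_ne_zero (by simp [hint])
  have hB : Integrable ((closedBall (0 : EuclideanSpace ℝ (Fin n)) r).indicator 1) :=
    (integrable_indicator_iff measurableSet_closedBall).mpr
      (integrableOn_const (C := (1 : ℝ)) (hr.trans_ne ENNReal.one_ne_top))
  have hdiff : ∫ x in C, (f x - (closedBall 0 r).indicator 1 x) ≤ 0 :=
    Measure.setIntegral_nonpos_of_radial_of_starConvex volume
      (h := fun x ↦ f x - (closedBall 0 r).indicator 1 x) (r := r) (hf.sub hB)
      (fun x y hxy ↦ by simp [indicator, hradial x y hxy, hxy])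
      (by rw [integral_sub hf hB, hint, integral_indicator_one measurableSet_closedBall,
        measureReal_def, hr, ENNReal.toReal_one, sub_self])
      (fun x hx ↦ by simpa [indicator_of_mem hx] using hbd x)
      (fun x hx ↦ by simpa [indicator_of_notMem hx] using hnonneg x)
      (hC.starConvex_zero_of_forall_neg_mem hsym) (hC.nullMeasurableSet volume)
  rw [integral_sub hf.integrableOn hB.integrableOn, setIntegral_indicator measurableSet_closedBall]
    at hdiff
  simp only [Pi.one_apply, setIntegral_const, smul_eq_mul, mul_one, measureReal_def] at hdiff
  linarith

theorem radial_density_less_peaked_than_ball (n : ℕ) (hn : 1 ≤ n)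
    (f : EuclideanSpace ℝ (Fin n) → ℝ) (hmeas : Measurable f)
    (hnonneg : ∀ x, 0 ≤ f x) (hbd : ∀ x, f x ≤ 1)
    (hint : ∫ x, f x = 1)
    (hradial : ∀ x y : EuclideanSpace ℝ (Fin n), ‖x‖ = ‖y‖ → f x = f y)
    (r : ℝ) (hr : volume (Metric.closedBall (0 : EuclideanSpace ℝ (Fin n)) r) = 1)
    (C : Set (EuclideanSpace ℝ (Fin n))) (hC : Convex ℝ C) (hsym : ∀ x ∈ C, -x ∈ C) :
    ∫ x in C, f x ≤
      (volume (C ∩ Metric.closedBall (0 : EuclideanSpace ℝ (Fin n)) r)).toReal :=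
  radial_density_less_peaked_than_ball_general n hn f hnonneg hbd hint hradial r hr C hC hsym
end

section
/- Fix u ∈ S^{n-1} and let R_u be the reflection about u^⊥. If K is a convex body in ℝ^n with the origin in its interior, K ⊆ B(0, R), and M_u(K) = (K + R_u K)/2, then ⋂_{i=1}^N B(-(R - h_{M_u(K)}(θ_i))θ_i, R) ⊇ (1/2) ⋂_{i=1}^N B(-(R - h_K(θ_i))θ_i, R) + (1/2) R_u(⋂_{i=1}^N B(-(R - h_K(R_u θ_i)) R_u θ_i, R)) for all θ_1, ..., θ_N ∈ S^{n-1}. -/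
open Metric Set Pointwise Submodule RealInnerProductSpace

/-- The support function of a set `K ⊆ ℝⁿ`. -/
noncomputable def supportFn {n : ℕ} (K : Set (EuclideanSpace ℝ (Fin n)))
    (θ : EuclideanSpace ℝ (Fin n)) : ℝ :=
  sSup ((fun y => ⟪y, θ⟫) '' K)

private lemma sSup_half_smul (s : Set ℝ) (hs : s.Nonempty) (hbs : BddAbove s) :
    sSup ((2⁻¹ : ℝ) • s) = 2⁻¹ * sSup s := by
  have hlub : IsLUB s (sSup s) := isLUB_csSup hs hbs
  have : IsLUB ((2⁻¹ : ℝ) • s) (2⁻¹ * sSup s) := by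
    constructor
    · rintro x ⟨y, hy, rfl⟩
      have := hlub.1 hy
      simpa [smul_eq_mul] using by nlinarith
    · intro b hb
      have : sSup s ≤ 2 * b := by
        apply hlub.2
        intro y hy
        have := hb ⟨y, hy, rfl⟩
        simp only [smul_eq_mul] at this
        linarith
      linarith
  exact this.csSup_eq (hs.smul_set)

private lemma supportFn_symmetral {n : ℕ} (u : EuclideanSpace ℝ (Fin n))
    (K : Set (EuclideanSpace ℝ (Fin n))) (hKcomp : IsCompact K) (hne : K.Nonempty)
    (θ : EuclideanSpace ℝ (Fin n)) :
    supportFn ((2⁻¹ : ℝ) • (K + (reflection (ℝ ∙ u)ᗮ) '' K)) θ =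
      2⁻¹ * (supportFn K θ + supportFn K ((reflection (ℝ ∙ u)ᗮ) θ)) := by
  set r := reflection (ℝ ∙ u)ᗮ with hr
  have hcont : ∀ v : EuclideanSpace ℝ (Fin n),
      Continuous (fun y : EuclideanSpace ℝ (Fin n) => ⟪y, v⟫) :=
    fun v => continuous_id.inner continuous_const
  have hinner : ∀ y, ⟪r y, θ⟫ = ⟪y, r θ⟫ := by
    intro y
    conv_lhs => rw [show θ = r (r θ) by rw [hr, reflection_reflection]]
    exact r.inner_map_map y (r θ)
  -- image of K under inner
  have hKne : ((fun y => ⟪y, θ⟫) '' K).Nonempty := hne.image _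
  have hKbd : BddAbove ((fun y => ⟪y, θ⟫) '' K) := (hKcomp.image (hcont θ)).bddAbove
  have hKne' : ((fun y => ⟪y, r θ⟫) '' K).Nonempty := hne.image _
  have hKbd' : BddAbove ((fun y => ⟪y, r θ⟫) '' K) := (hKcomp.image (hcont (r θ))).bddAbove
  have himg_r : (fun y => ⟪y, θ⟫) '' (r '' K) = (fun y => ⟪y, r θ⟫) '' K := by
    rw [Set.image_image]
    exact Set.image_congr fun y _ => hinner y
  have himg_add : (fun y => ⟪y, θ⟫) '' (K + r '' K)
      = (fun y => ⟪y, θ⟫) '' K + (fun y => ⟪y, θ⟫) '' (r '' K) := by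
    ext x
    simp only [Set.mem_add, Set.mem_image]
    constructor
    · rintro ⟨z, ⟨a, ha, c, hc, rfl⟩, rfl⟩
      exact ⟨_, ⟨a, ha, rfl⟩, _, ⟨c, hc, rfl⟩, (inner_add_left a c θ).symm⟩
    · rintro ⟨p, ⟨a, ha, rfl⟩, q, ⟨c, hc, rfl⟩, rfl⟩
      exact ⟨a + c, ⟨a, ha, c, hc, rfl⟩, inner_add_left a c θ⟩
  have himg_smul : (fun y => ⟪y, θ⟫) '' ((2⁻¹ : ℝ) • (K + r '' K))
      = (2⁻¹ : ℝ) • ((fun y => ⟪y, θ⟫) '' (K + r '' K)) := by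
    ext x
    simp only [Set.mem_smul_set, Set.mem_image]
    constructor
    · rintro ⟨z, ⟨w, hw, rfl⟩, rfl⟩
      exact ⟨⟪w, θ⟫, ⟨w, hw, rfl⟩, (real_inner_smul_left w θ 2⁻¹).symm⟩
    · rintro ⟨p, ⟨w, hw, rfl⟩, rfl⟩
      exact ⟨_, ⟨w, hw, rfl⟩, real_inner_smul_left w θ 2⁻¹⟩
  have hsumne : ((fun y => ⟪y, θ⟫) '' (K + r '' K)).Nonempty := by
    rw [himg_add]; exact hKne.add (by rw [himg_r]; exact hKne')
  have hsumbd : BddAbove ((fun y => ⟪y, θ⟫) '' (K + r '' K)) := by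
    rw [himg_add, himg_r]; exact hKbd.add hKbd'
  unfold supportFn
  rw [himg_smul, sSup_half_smul _ hsumne hsumbd, himg_add, himg_r,
    csSup_add hKne hKbd hKne' hKbd']

theorem minkowski_symmetral_ball_inter (n N : ℕ)
    (u : EuclideanSpace ℝ (Fin n)) (hu : ‖u‖ = 1)
    (K : Set (EuclideanSpace ℝ (Fin n)))
    (hKcomp : IsCompact K) (hKconv : Convex ℝ K) (hK0 : 0 ∈ interior K)
    (R : ℝ) (hKR : K ⊆ Metric.closedBall 0 R)
    (θ : Fin N → EuclideanSpace ℝ (Fin n))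
    (hθ : ∀ i, θ i ∈ Metric.sphere (0 : EuclideanSpace ℝ (Fin n)) 1) :
    (2⁻¹ : ℝ) • (⋂ i, Metric.closedBall ((-(R - supportFn K (θ i))) • θ i) R) +
        (2⁻¹ : ℝ) • ((reflection (ℝ ∙ u)ᗮ) ''
          ⋂ i, Metric.closedBall
            ((-(R - supportFn K ((reflection (ℝ ∙ u)ᗮ) (θ i)))) •
              ((reflection (ℝ ∙ u)ᗮ) (θ i))) R) ⊆
      ⋂ i, Metric.closedBall
        ((-(R - supportFn ((2⁻¹ : ℝ) • (K + (reflection (ℝ ∙ u)ᗮ) '' K)) (θ i))) • θ i) R := by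
  set r := reflection (ℝ ∙ u)ᗮ with hr
  have hne : K.Nonempty := ⟨0, interior_subset hK0⟩
  rintro x ⟨p, ⟨a, ha, rfl⟩, q, ⟨b0, ⟨b, hb, rfl⟩, rfl⟩, rfl⟩
  rw [Set.mem_iInter]
  intro i
  have hsupp := supportFn_symmetral u K hKcomp hne (θ i)
  set s := supportFn K (θ i)
  set t := supportFn K (r (θ i))
  have ha' : a ∈ closedBall ((-(R - s)) • θ i) R := Set.mem_iInter.1 ha i
  have hb' : b ∈ closedBall ((-(R - t)) • r (θ i)) R := Set.mem_iInter.1 hb i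
  have hrb : r b ∈ closedBall ((-(R - t)) • θ i) R := by
    rw [mem_closedBall] at hb' ⊢
    have : dist (r b) (r ((-(R - t)) • r (θ i))) ≤ R := by
      rw [r.dist_map]; exact hb'
    simpa [map_smul, hr, reflection_reflection] using this
  have hcenter : (-(R - supportFn ((2⁻¹ : ℝ) • (K + r '' K)) (θ i))) • θ i
      = (2⁻¹ : ℝ) • ((-(R - s)) • θ i) + (2⁻¹ : ℝ) • ((-(R - t)) • θ i) := by
    rw [hsupp, smul_smul, smul_smul, ← add_smul]
    ring_nf
  rw [mem_closedBall, hcenter]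
  calc dist ((2⁻¹ : ℝ) • a + (2⁻¹ : ℝ) • r b)
        ((2⁻¹ : ℝ) • ((-(R - s)) • θ i) + (2⁻¹ : ℝ) • ((-(R - t)) • θ i))
      ≤ dist ((2⁻¹ : ℝ) • a) ((2⁻¹ : ℝ) • ((-(R - s)) • θ i))
        + dist ((2⁻¹ : ℝ) • r b) ((2⁻¹ : ℝ) • ((-(R - t)) • θ i)) := dist_add_add_le _ _ _ _
    _ = 2⁻¹ * dist a ((-(R - s)) • θ i) + 2⁻¹ * dist (r b) ((-(R - t)) • θ i) := by
        rw [dist_smul₀, dist_smul₀]; norm_num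
    _ ≤ 2⁻¹ * R + 2⁻¹ * R := by
        have h1 := mem_closedBall.1 ha'
        have h2 := mem_closedBall.1 hrb
        linarith
    _ = R := by ring
end
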